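/- Under the standing assumptions, let λ_k → ∞ and let u_{λ_k} be ground state solutions of Δ²u − Δu + (λ_k a + 1)u = |u|^{p−2}u with uniformly bounded E_{λ_k}-norms. If u_{λ_k} converges pointwise (and weakly in W^{2,2}(V)) to u₀, then u₀ vanishes identically on the complement of the potential well Ω = {a = 0}. -/

import Mathlib

open Filter Topology

structure GraphData (V : Type*) where
  ω : V → V → ℝ
  μ : V → ℝ
  sym : ∀ x y, ω x y = ω y x
  nonneg : ∀ x y, 0 ≤ ω x y
  loopless : ∀ x, ω x x = 0
  locfin : ∀ x, {y | ω x y ≠ 0}.Finite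
  μpos : ∀ x, 0 < μ x

variable {V : Type*}

noncomputable def GraphData.lap (g : GraphData V) (u : V → ℝ) (x : V) : ℝ :=
  (1 / g.μ x) * ∑' y, g.ω x y * (u y - u x)

noncomputable def GraphData.grad (g : GraphData V) (u v : V → ℝ) (x : V) : ℝ :=
  (1 / (2 * g.μ x)) * ∑' y, g.ω x y * (u y - u x) * (v y - v x)

noncomputable def GraphData.integral (g : GraphData V) (f : V → ℝ) : ℝ :=
  ∑' x, g.μ x * f x

def GraphData.G (g : GraphData V) : SimpleGraph V where
  Adj x y := 0 < g.ω x y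
  symm := ⟨fun x y h => by show 0 < g.ω y x; rw [g.sym y x]; exact h⟩
  loopless := ⟨fun x h => by have h' : 0 < g.ω x x := h; simp [g.loopless x] at h'⟩

noncomputable def GraphData.enormSq (g : GraphData V) (a : V → ℝ) (lam : ℝ) (u : V → ℝ) : ℝ :=
  ∑' x, g.μ x * ((g.lap u x) ^ 2 + g.grad u u x + (lam * a x + 1) * (u x) ^ 2)

def GraphData.memE (g : GraphData V) (a : V → ℝ) (lam : ℝ) (u : V → ℝ) : Prop :=
  Summable fun x => g.μ x * ((g.lap u x) ^ 2 + g.grad u u x + (lam * a x + 1) * (u x) ^ 2)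

noncomputable def GraphData.lpInt (g : GraphData V) (p : ℝ) (u : V → ℝ) : ℝ :=
  ∑' x, g.μ x * |u x| ^ p

noncomputable def GraphData.Jlam (g : GraphData V) (a : V → ℝ) (lam p : ℝ) (u : V → ℝ) : ℝ :=
  (1 / 2) * g.enormSq a lam u - (1 / p) * g.lpInt p u

def GraphData.Nehari (g : GraphData V) (a : V → ℝ) (lam p : ℝ) : Set (V → ℝ) :=
  {u | u ≠ 0 ∧ g.memE a lam u ∧ g.enormSq a lam u = g.lpInt p u}

noncomputable def GraphData.Jderiv (g : GraphData V) (a : V → ℝ) (lam p : ℝ) (u φ : V → ℝ) : ℝ :=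
  (∑' x, g.μ x * (g.lap u x * g.lap φ x + g.grad u φ x + (lam * a x + 1) * u x * φ x))
    - ∑' x, g.μ x * (|u x| ^ (p - 2) * u x * φ x)

def GraphData.bdry (g : GraphData V) (Ω : Set V) : Set V :=
  {y | y ∉ Ω ∧ ∃ x ∈ Ω, 0 < g.ω x y}

noncomputable def GraphData.hnormSq (g : GraphData V) (Ω : Set V) (u : V → ℝ) : ℝ :=
  (∑' x : ↥(Ω ∪ g.bdry Ω), g.μ x * ((g.lap u x) ^ 2 + g.grad u u x))
    + ∑' x : Ω, g.μ x * (u x) ^ 2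

noncomputable def GraphData.lpIntO (g : GraphData V) (Ω : Set V) (p : ℝ) (u : V → ℝ) : ℝ :=
  ∑' x : Ω, g.μ x * |u x| ^ p

noncomputable def GraphData.JOmega (g : GraphData V) (Ω : Set V) (p : ℝ) (u : V → ℝ) : ℝ :=
  (1 / 2) * g.hnormSq Ω u - (1 / p) * g.lpIntO Ω p u

def GraphData.memH (g : GraphData V) (Ω : Set V) (u : V → ℝ) : Prop :=
  ∀ x ∉ Ω, u x = 0

def GraphData.NehariO (g : GraphData V) (Ω : Set V) (p : ℝ) : Set (V → ℝ) :=
  {u | u ≠ 0 ∧ g.memH Ω u ∧ g.hnormSq Ω u = g.lpIntO Ω p u}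

noncomputable def GraphData.JderivO (g : GraphData V) (Ω : Set V) (p : ℝ) (u φ : V → ℝ) : ℝ :=
  (∑' x : ↥(Ω ∪ g.bdry Ω), g.μ x * (g.lap u x * g.lap φ x + g.grad u φ x))
    + (∑' x : Ω, g.μ x * (u x * φ x))
    - ∑' x : Ω, g.μ x * (|u x| ^ (p - 2) * u x * φ x)

/-
Every summand of the energy is nonnegative, so the single summand at a vertex x
with a x > 0 gives λ_k μ(x) a(x) u_k(x)² ≤ ‖u_k‖²_{E_{λ_k}} ≤ B. As λ_k → ∞ this forces
u_k(x) → 0, hence u₀(x) = 0.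
-/

theorem eq_zero_of_tendsto_of_mul_sq_le {α : Type*} {l : Filter α} [l.NeBot] {c v : α → ℝ}
    {v₀ B : ℝ} (hc : Tendsto c l atTop) (hv : Tendsto v l (𝓝 v₀))
    (hB : ∀ᶠ k in l, c k * v k ^ 2 ≤ B) : v₀ = 0 := by
  by_contra hv₀
  have hunbdd : Tendsto (fun k => c k * v k ^ 2) l atTop :=
    hc.atTop_mul_pos (by positivity) (hv.pow 2)
  obtain ⟨k, hlt, hle⟩ := ((hunbdd.eventually_gt_atTop B).and hB).exists
  linarith

namespace GraphData

variable (g : GraphData V)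

theorem grad_self_nonneg (u : V → ℝ) (x : V) : 0 ≤ g.grad u u x := by
  refine mul_nonneg (by have := g.μpos x; positivity) (tsum_nonneg fun y => ?_)
  rw [mul_assoc, ← sq]
  exact mul_nonneg (g.nonneg x y) (sq_nonneg _)

theorem mul_sq_le_enormSq {a : V → ℝ} (ha : ∀ x, 0 ≤ a x) {lam : ℝ} (hlam : 0 ≤ lam)
    {u : V → ℝ} (hu : g.memE a lam u) (x : V) :
    lam * g.μ x * a x * u x ^ 2 ≤ g.enormSq a lam u := by
  have hsummand : ∀ y, lam * g.μ y * a y * u y ^ 2 ≤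
      g.μ y * (g.lap u y ^ 2 + g.grad u u y + (lam * a y + 1) * u y ^ 2) := fun y => by
    have := g.grad_self_nonneg u y
    have := g.μpos y
    nlinarith [sq_nonneg (g.lap u y), sq_nonneg (u y)]
  refine (hsummand x).trans (hu.le_tsum x fun y _ => ?_)
  exact (mul_nonneg (mul_nonneg (mul_nonneg hlam (g.μpos y).le) (ha y)) (sq_nonneg _)).trans
    (hsummand y)

end GraphData

theorem stmt13_general (g : GraphData V) (p : ℝ)
    (a : V → ℝ) (ha : ∀ x, 0 ≤ a x)
    (lam : ℕ → ℝ)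
    (hlaminf : Filter.Tendsto lam Filter.atTop Filter.atTop)
    (u : ℕ → V → ℝ) (hN : ∀ k, u k ∈ g.Nehari a (lam k) p)
    (B : ℝ) (hB : ∀ k, g.enormSq a (lam k) (u k) ≤ B)
    (u₀ : V → ℝ)
    (hconv : ∀ x, Filter.Tendsto (fun k => u k x) Filter.atTop (nhds (u₀ x))) :
    ∀ x, a x ≠ 0 → u₀ x = 0 := by
  intro x hax
  have hweight : 0 < g.μ x * a x := mul_pos (g.μpos x) ((ha x).lt_of_ne' hax)
  refine eq_zero_of_tendsto_of_mul_sq_le (B := B) (hlaminf.atTop_mul_const hweight) (hconv x) ?_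
  filter_upwards [hlaminf.eventually_ge_atTop 0] with k hlam
  calc lam k * (g.μ x * a x) * u k x ^ 2 = lam k * g.μ x * a x * u k x ^ 2 := by ring
    _ ≤ g.enormSq a (lam k) (u k) := g.mul_sq_le_enormSq ha hlam (hN k).2.1 x
    _ ≤ B := hB k

/-- the limit of ground states vanishes outside the potential well. -/
theorem stmt13 (g : GraphData V) (μmin C p : ℝ) (hμmin : 0 < μmin)
    (hμ : ∀ x, μmin ≤ g.μ x) (hω : ∀ x, ∑' y, g.ω x y ≤ C) (hconn : g.G.Connected)
    (a : V → ℝ) (ha : ∀ x, 0 ≤ a x)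
    (hΩne : {x | a x = 0}.Nonempty)
    (hΩbd : ∃ D : ℕ, ∀ x ∈ {x | a x = 0}, ∀ y ∈ {x | a x = 0}, g.G.dist x y ≤ D)
    (hΩconn : (g.G.induce {x | a x = 0}).Connected)
    (x₀ : V) (hainf : ∀ M : ℝ, ∃ R : ℕ, ∀ x, R ≤ g.G.dist x x₀ → M ≤ a x)
    (hp : 2 < p)
    (lam : ℕ → ℝ) (hlam1 : ∀ k, 1 < lam k)
    (hlaminf : Filter.Tendsto lam Filter.atTop Filter.atTop)
    (u : ℕ → V → ℝ) (hN : ∀ k, u k ∈ g.Nehari a (lam k) p)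
    (B : ℝ) (hB : ∀ k, g.enormSq a (lam k) (u k) ≤ B)
    (u₀ : V → ℝ)
    (hconv : ∀ x, Filter.Tendsto (fun k => u k x) Filter.atTop (nhds (u₀ x))) :
    ∀ x, a x ≠ 0 → u₀ x = 0 :=
  stmt13_general g p a ha lam hlaminf u hN B hB u₀ hconv
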